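/- arXiv:2105.02607 — 7 statements merged into one kernel-verified Lean document; each statement's English description precedes it below -/
import Mathlib

section
/- Let 0 < ρ < 1 and for n, m ∈ ℕ define E_m(n) = (1−ρ)^{m+1}·ρ^n·∏_{k=1}^{n} (1 + m/k). Then for every x > 0 and y > 0, lim_{A→∞} (1/A)·log E_{⌊Ay⌋}(⌊Ax⌋) = −K(x,y), where K(x,y) = x·log(x/ρ) + y·log y − (x+y)·log(x+y) − y·log(1−ρ). -/
noncomputable section

open Real Filter Set Topology

/-- Stationary probability of `n` customers in the single-server PS queue with
`m` permanent customers: `E_m(n) = (1−ρ)^{m+1} ρ^n ∏_{k=1}^n (1 + m/k)`. -/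
def Estat (ρ : ℝ) (m n : ℕ) : ℝ :=
  (1 - ρ) ^ (m + 1) * ρ ^ n * ∏ k ∈ Finset.Icc 1 n, (1 + (m : ℝ) / k)

/-- The decay rate `K(x,y) = x log(x/ρ) + y log y − (x+y) log(x+y) − y log(1−ρ)`. -/
def Kdecay (ρ x y : ℝ) : ℝ :=
  x * Real.log (x / ρ) + y * Real.log y - (x + y) * Real.log (x + y)
    - y * Real.log (1 - ρ)

open scoped Nat

/-!
`E_m(n) = (1-ρ)^{m+1} ρ^n C(n+m, n)` is a negative binomial probability, so
`log E_m(n) = (m+1) log(1-ρ) + n log ρ + log (n+m)! - log n! - log m!`.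
By Stirling, `log N! = N log N - N + o(N)`; with `N = ⌊cA⌋` this gives
`(log N!)/A = c log c - c + (N/A) log A + o(1)`, and the `log A` terms of the three
factorials cancel because `(n+m) - n - m = 0`.
-/

theorem prod_Icc_one_add_div_eq_choose (m n : ℕ) :
    ∏ k ∈ Finset.Icc 1 n, (1 + (m : ℝ) / k) = (n + m).choose n := by
  induction n with
  | zero => simp
  | succ n ih =>
    rw [Finset.prod_Icc_succ_top (by omega), ih, Nat.add_right_comm]
    have hrec := Nat.add_one_mul_choose_eq (n + m) n
    rw [← Nat.cast_inj (R := ℝ)] at hrec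
    push_cast at hrec ⊢
    field_simp
    linarith

theorem log_Estat {ρ : ℝ} (hρ0 : ρ ≠ 0) (hρ1 : ρ ≠ 1) (m n : ℕ) :
    log (Estat ρ m n) = (m + 1) * log (1 - ρ) + n * log ρ
      + (log (n + m)! - log n ! - log m !) := by
  have h1ρ : 1 - ρ ≠ 0 := sub_ne_zero.mpr hρ1.symm
  have hfac (k : ℕ) : (k ! : ℝ) ≠ 0 := by positivity
  rw [Estat, prod_Icc_one_add_div_eq_choose, Nat.cast_add_choose,
    log_mul (by positivity) (by positivity), log_mul (by positivity) (by positivity),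
    log_pow, log_pow, log_div (hfac _) (mul_ne_zero (hfac _) (hfac _)),
    log_mul (hfac _) (hfac _)]
  push_cast
  ring

theorem tendsto_log_factorial_sub_div :
    Tendsto (fun n : ℕ => (log n ! - (n * log n - n)) / n) atTop (𝓝 0) := by
  have hseq : Tendsto (fun n : ℕ => log (Stirling.stirlingSeq n) / n) atTop (𝓝 0) :=
    ((continuousAt_log (by positivity)).tendsto.comp
      Stirling.tendsto_stirlingSeq_sqrt_pi).div_atTop tendsto_natCast_atTop_atTop
  have hlog : Tendsto (fun n : ℕ => log (2 * n) / (2 * n)) atTop (𝓝 0) :=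
    isLittleO_log_id_atTop.tendsto_div_nhds_zero.comp
      (tendsto_natCast_atTop_atTop.const_mul_atTop two_pos)
  -- `log n! = n log n - n + log (stirlingSeq n) + log (2n) / 2`
  rw [← add_zero (0 : ℝ)]
  refine (hseq.add hlog).congr' ?_
  filter_upwards [eventually_ne_atTop 0] with n hn
  have hn' : (n : ℝ) ≠ 0 := Nat.cast_ne_zero.mpr hn
  rw [Stirling.log_stirlingSeq_formula, log_div hn' (exp_pos 1).ne', log_exp]
  field_simp
  ring

theorem tendsto_log_factorial_div_sub_mul_log {N : ℝ → ℕ} {c : ℝ} (hc : 0 < c)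
    (hN : Tendsto (fun A => (N A : ℝ) / A) atTop (𝓝 c)) :
    Tendsto (fun A => log (N A)! / A - (N A / A) * log A) atTop (𝓝 (c * log c - c)) := by
  have hNreal : Tendsto (fun A => (N A : ℝ)) atTop atTop :=
    (hN.pos_mul_atTop hc tendsto_id).congr' <| by
      filter_upwards [eventually_ne_atTop 0] with A hA
      exact div_mul_cancel₀ _ hA
  have hentropy : Tendsto (fun A => (N A / A) * log (N A / A)) atTop (𝓝 (c * log c)) :=
    (continuousAt_id.mul (continuousAt_log hc.ne')).tendsto.comp hN
  have hstirling := hN.mul (tendsto_log_factorial_sub_div.comp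
    (tendsto_natCast_atTop_iff.mp hNreal))
  rw [mul_zero] at hstirling
  rw [← add_zero (c * log c - c)]
  refine ((hentropy.sub hN).add hstirling).congr' ?_
  filter_upwards [eventually_gt_atTop 0, hNreal.eventually_gt_atTop 0] with A hA hNA
  rw [Function.comp_apply, log_div hNA.ne' hA.ne']
  field_simp
  ring

theorem tendsto_log_choose_div {n m : ℝ → ℕ} {x y : ℝ} (hx : 0 < x) (hy : 0 < y)
    (hn : Tendsto (fun A => (n A : ℝ) / A) atTop (𝓝 x))
    (hm : Tendsto (fun A => (m A : ℝ) / A) atTop (𝓝 y)) :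
    Tendsto (fun A => (log (n A + m A)! - log (n A)! - log (m A)!) / A) atTop
      (𝓝 ((x + y) * log (x + y) - x * log x - y * log y)) := by
  have hnm : Tendsto (fun A => ((n A + m A : ℕ) : ℝ) / A) atTop (𝓝 (x + y)) :=
    (hn.add hm).congr fun A => by push_cast; exact (add_div _ _ _).symm
  have hlim := ((tendsto_log_factorial_div_sub_mul_log (add_pos hx hy) hnm).sub
    (tendsto_log_factorial_div_sub_mul_log hx hn)).sub
    (tendsto_log_factorial_div_sub_mul_log hy hm)
  convert hlim using 2 with A
  · push_cast
    ring
  · ring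

/-- Lemma 1: `(1/A) log E_{⌊Ay⌋}(⌊Ax⌋) → −K(x,y)` as `A → ∞`. -/
theorem log_Estat_decay (ρ : ℝ) (hρ0 : 0 < ρ) (hρ1 : ρ < 1) (x y : ℝ)
    (hx : 0 < x) (hy : 0 < y) :
    Tendsto (fun A : ℝ => (1 / A) * Real.log (Estat ρ ⌊A * y⌋₊ ⌊A * x⌋₊))
      atTop (𝓝 (-Kdecay ρ x y)) := by
  have hfloor {c : ℝ} (hc : 0 < c) :
      Tendsto (fun A => (⌊A * c⌋₊ : ℝ) / A) atTop (𝓝 c) := by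
    simpa only [mul_comm c] using tendsto_nat_floor_mul_div_atTop hc.le
  have hm := hfloor hy
  have hn := hfloor hx
  have hm1 : Tendsto (fun A => ((⌊A * y⌋₊ : ℝ) + 1) / A) atTop (𝓝 y) := by
    simpa [add_div] using hm.add tendsto_inv_atTop_zero
  have hlim := ((hm1.mul_const (log (1 - ρ))).add (hn.mul_const (log ρ))).add
    (tendsto_log_choose_div hx hy hn hm)
  have hK : y * log (1 - ρ) + x * log ρ + ((x + y) * log (x + y) - x * log x - y * log y)
      = -Kdecay ρ x y := by
    rw [Kdecay, log_div hx.ne' hρ0.ne']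
    ring
  rw [hK] at hlim
  refine hlim.congr fun A => ?_
  rw [log_Estat hρ0.ne' hρ1.ne]
  ring
end
end

section
/- Let 0 < ρ < 1 and for n, m ∈ ℕ define E_m(n) = (1−ρ)^{m+1}·ρ^n·∏_{k=1}^{n} (1 + m/k). Extend K to positive reals by K(a,b) = a·log(a/ρ) + b·log b − (a+b)·log(a+b) − b·log(1−ρ). Then E_m(n) / [ (1−ρ)·√((n+m)/(2π·n·m))·exp(−K(n,m)) ] → 1 as n and m jointly tend to infinity, i.e., for every ε > 0 there exists N such that the ratio lies within ε of 1 whenever n ≥ N and m ≥ N. -/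
noncomputable section

open Real Filter Set Topology

namespace EstatAux

open Stirling

lemma prod_eq_choose (m : ℕ) : ∀ n : ℕ,
    ∏ k ∈ Finset.Icc 1 n, (1 + (m : ℝ) / k) = ((n + m).choose n : ℝ) := by
  intro n
  induction n with
  | zero => simp
  | succ n ih =>
    rw [Finset.prod_Icc_succ_top (Nat.le_add_left 1 n), ih]
    have h1 : (0:ℝ) < (n:ℝ) + 1 := by positivity
    have key : (n + m + 1) * (n + m).choose n = (n + m + 1).choose (n + 1) * (n + 1) := by
      simpa using Nat.add_one_mul_choose_eq (n + m) n
    have keyR : ((n:ℝ) + m + 1) * ((n + m).choose n : ℝ)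
        = ((n + m + 1).choose (n + 1) : ℝ) * ((n:ℝ) + 1) := by exact_mod_cast key
    have h3 : (1 + (m:ℝ)/((n:ℕ)+1:ℕ)) = ((n:ℝ) + m + 1)/((n:ℝ)+1) := by
      push_cast; field_simp; ring
    rw [h3]
    have h2 : ((n+1) + m) = (n + m + 1) := by ring
    rw [h2]
    field_simp
    linarith [keyR]

lemma exp_negK (ρ : ℝ) (hρ0 : 0 < ρ) (hρ1 : ρ < 1) {n m : ℕ} (hn : 1 ≤ n) (hm : 1 ≤ m) :
    Real.exp (-Kdecay ρ n m)
      = ρ ^ n * (1 - ρ) ^ m * ((n:ℝ) + m) ^ (n + m) / ((n:ℝ) ^ n * (m:ℝ) ^ m) := by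
  have hn0 : (0:ℝ) < n := by exact_mod_cast hn
  have hm0 : (0:ℝ) < m := by exact_mod_cast hm
  have h1ρ : (0:ℝ) < 1 - ρ := by linarith
  have hX : (0:ℝ) < ρ ^ n * (1 - ρ) ^ m * ((n:ℝ) + m) ^ (n + m) / ((n:ℝ) ^ n * (m:ℝ) ^ m) := by
    positivity
  rw [← Real.exp_log hX]
  congr 1
  rw [Kdecay, Real.log_div hn0.ne' hρ0.ne',
    Real.log_div (by positivity) (by positivity), Real.log_mul (by positivity) (by positivity),
    Real.log_mul (by positivity) (by positivity), Real.log_pow, Real.log_pow, Real.log_pow,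
    Real.log_mul (by positivity) (by positivity), Real.log_pow, Real.log_pow]
  push_cast
  ring

lemma fact_eq {k : ℕ} (hk : 1 ≤ k) :
    (k.factorial : ℝ) = stirlingSeq k * (Real.sqrt 2 * Real.sqrt k * ((k:ℝ) ^ k / rexp 1 ^ k)) := by
  have hk0 : (0:ℝ) < k := by exact_mod_cast hk
  rw [stirlingSeq, Real.sqrt_mul (by norm_num : (0:ℝ) ≤ 2) (k:ℝ), div_pow,
    div_mul_cancel₀ _ (by positivity : Real.sqrt 2 * Real.sqrt (k:ℝ) * ((k:ℝ) ^ k / rexp 1 ^ k) ≠ 0)]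

lemma ratio_eq (ρ : ℝ) (hρ0 : 0 < ρ) (hρ1 : ρ < 1) {n m : ℕ} (hn : 1 ≤ n) (hm : 1 ≤ m) :
    Estat ρ m n /
        ((1 - ρ) * Real.sqrt (((n : ℝ) + m) / (2 * π * n * m)) *
          Real.exp (-Kdecay ρ n m))
      = Real.sqrt π * stirlingSeq (n + m) / (stirlingSeq n * stirlingSeq m) := by
  have hn0 : (0:ℝ) < n := by exact_mod_cast hn
  have hm0 : (0:ℝ) < m := by exact_mod_cast hm
  have h1ρ : (0:ℝ) < 1 - ρ := by linarith
  have hnm0 : (0:ℝ) < (n:ℝ) + m := by linarith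
  have hsn : 0 < stirlingSeq n := by rw [stirlingSeq]; positivity
  have hsm : 0 < stirlingSeq m := by rw [stirlingSeq]; positivity
  have hsnm : 0 < stirlingSeq (n + m) := by
    rw [stirlingSeq]
    have : (0:ℝ) < ((n+m:ℕ):ℝ) := by push_cast; linarith
    positivity
  have hsqrt : Real.sqrt (((n : ℝ) + m) / (2 * π * n * m))
      = Real.sqrt ((n:ℝ)+m) / (Real.sqrt 2 * Real.sqrt π * Real.sqrt n * Real.sqrt m) := by
    rw [Real.sqrt_div hnm0.le, Real.sqrt_mul (by positivity : (0:ℝ) ≤ 2 * π * n),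
      Real.sqrt_mul (by positivity : (0:ℝ) ≤ 2 * π), Real.sqrt_mul (by norm_num : (0:ℝ) ≤ 2)]
  have hfn := fact_eq hn
  have hfm := fact_eq hm
  have hfnm := fact_eq (k := n + m) (by omega)
  have hchoose : ((n + m).choose n : ℝ)
      = ((n+m).factorial : ℝ) / ((n.factorial : ℝ) * (m.factorial : ℝ)) := by
    have := Nat.cast_choose ℝ (Nat.le_add_right n m)
    simpa using this
  rw [Estat, prod_eq_choose, hchoose, exp_negK ρ hρ0 hρ1 hn hm, hsqrt, hfn, hfm, hfnm]
  have hcast : ((n+m:ℕ):ℝ) = (n:ℝ) + m := by push_cast; ring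
  rw [hcast]
  have he : rexp 1 ^ (n + m) = rexp 1 ^ n * rexp 1 ^ m := pow_add _ _ _
  rw [he]
  have h2 : (0:ℝ) < Real.sqrt 2 := by positivity
  have hπ : (0:ℝ) < Real.sqrt π := by have := Real.pi_pos; positivity
  have hsn' : (0:ℝ) < Real.sqrt n := Real.sqrt_pos.mpr hn0
  have hsm' : (0:ℝ) < Real.sqrt m := Real.sqrt_pos.mpr hm0
  have hsnm' : (0:ℝ) < Real.sqrt ((n:ℝ)+m) := Real.sqrt_pos.mpr hnm0
  have he1 : (0:ℝ) < rexp 1 := Real.exp_pos 1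
  field_simp
  ring

lemma tendsto_g :
    Tendsto (fun p : ℕ × ℕ =>
        Real.sqrt π * stirlingSeq (p.1 + p.2) / (stirlingSeq p.1 * stirlingSeq p.2))
      (atTop ×ˢ atTop) (𝓝 1) := by
  have h1 : Tendsto (fun p : ℕ × ℕ => p.1) (atTop ×ˢ atTop) atTop := tendsto_fst
  have h2 : Tendsto (fun p : ℕ × ℕ => p.2) (atTop ×ˢ atTop) atTop := tendsto_snd
  have hsum : Tendsto (fun p : ℕ × ℕ => p.1 + p.2) (atTop ×ˢ atTop) atTop :=
    tendsto_atTop_mono (fun p => Nat.le_add_right p.1 p.2) h1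
  have ha : Tendsto (fun p : ℕ × ℕ => stirlingSeq (p.1 + p.2)) (atTop ×ˢ atTop)
      (𝓝 (Real.sqrt π)) := Stirling.tendsto_stirlingSeq_sqrt_pi.comp hsum
  have hb : Tendsto (fun p : ℕ × ℕ => stirlingSeq p.1) (atTop ×ˢ atTop)
      (𝓝 (Real.sqrt π)) := Stirling.tendsto_stirlingSeq_sqrt_pi.comp h1
  have hc : Tendsto (fun p : ℕ × ℕ => stirlingSeq p.2) (atTop ×ˢ atTop)
      (𝓝 (Real.sqrt π)) := Stirling.tendsto_stirlingSeq_sqrt_pi.comp h2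
  have hπ : (0:ℝ) < Real.sqrt π := Real.sqrt_pos.mpr Real.pi_pos
  have hne : Real.sqrt π * Real.sqrt π ≠ 0 := by positivity
  have hmul : Tendsto (fun p : ℕ × ℕ => Real.sqrt π * stirlingSeq (p.1 + p.2))
      (atTop ×ˢ atTop) (𝓝 (Real.sqrt π * Real.sqrt π)) := tendsto_const_nhds.mul ha
  have hdiv := hmul.div (hb.mul hc) hne
  have heq : Real.sqrt π * Real.sqrt π / (Real.sqrt π * Real.sqrt π) = 1 :=
    div_self hne
  rwa [heq] at hdiv

end EstatAux

/-- Sharp asymptotics: `E_m(n) ∼ (1−ρ) √((n+m)/(2π n m)) e^{−K(n,m)}` as `n,m`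
jointly tend to infinity. -/
theorem Estat_sharp_asymptotics (ρ : ℝ) (hρ0 : 0 < ρ) (hρ1 : ρ < 1) :
    ∀ ε > (0:ℝ), ∃ N : ℕ, ∀ n m : ℕ, N ≤ n → N ≤ m →
      |Estat ρ m n /
          ((1 - ρ) * Real.sqrt (((n : ℝ) + m) / (2 * π * n * m)) *
            Real.exp (-Kdecay ρ n m)) - 1| ≤ ε := by
  intro ε hε
  have hT := EstatAux.tendsto_g
  have hev : ∀ᶠ p : ℕ × ℕ in atTop ×ˢ atTop,
      |Real.sqrt π * Stirling.stirlingSeq (p.1 + p.2) /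
        (Stirling.stirlingSeq p.1 * Stirling.stirlingSeq p.2) - 1| ≤ ε := by
    have : ∀ᶠ x : ℝ in 𝓝 (1:ℝ), |x - 1| ≤ ε := by
      have : Metric.closedBall (1:ℝ) ε ∈ 𝓝 (1:ℝ) := Metric.closedBall_mem_nhds _ hε
      filter_upwards [this] with x hx
      simpa [Real.dist_eq] using hx
    exact hT.eventually this
  rw [Filter.prod_atTop_atTop_eq, Filter.eventually_atTop] at hev
  obtain ⟨a, ha⟩ := hev
  refine ⟨max 1 (max a.1 a.2), fun n m hn hm => ?_⟩
  have hn1 : 1 ≤ n := le_trans (le_max_left _ _) hn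
  have hm1 : 1 ≤ m := le_trans (le_max_left _ _) hm
  have hle : a ≤ (n, m) := by
    constructor
    · exact le_trans (le_trans (le_max_left _ _) (le_max_right _ _)) hn
    · exact le_trans (le_trans (le_max_right _ _) (le_max_right _ _)) hm
  have := ha (n, m) hle
  rwa [← EstatAux.ratio_eq ρ hρ0 hρ1 hn1 hm1] at this

end
end

section
/- Let α, β, μ, ν, θ > 0 and let Π : ℕ×ℕ → [0,∞) be a probability mass function (Σ_{n,m} Π(n,m) = 1) with Σ_{m} m·Π(n,m) < ∞ for every n, satisfying for all (n,m) ∈ ℕ² the Kolmogorov equations [α + β + ((μn+νm)/(n+m))·1_{n+m>0} + θm]·Π(n,m) = α·Π(n−1,m)·1_{n>0} + β·Π(n,m−1)·1_{m>0} + (μ(n+1)/(n+m+1))·Π(n+1,m) + (m+1)·(ν/(n+m+1)+θ)·Π(n,m+1). Then for every n ∈ ℕ, α·Σ_{m≥0} Π(n,m) = μ·(n+1)·Σ_{m≥0} Π(n+1,m)/(n+m+1). -/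
noncomputable section

open Real Filter Set

/-- The stationary Kolmogorov equations of the two-class Markovian
processor-sharing queue with one impatient class: patient arrival rate `α`,
impatient arrival rate `β`, service rates `μ` and `ν`, impatience rate `θ`. -/
def KolmogorovEqs (α β μ ν θ : ℝ) (P : ℕ → ℕ → ℝ) : Prop :=
  ∀ n m : ℕ,
    (α + β + (if 0 < n + m then (μ * n + ν * m) / ((n : ℝ) + m) else 0) + θ * m) * P n m
      = α * (if 0 < n then P (n - 1) m else 0)
        + β * (if 0 < m then P n (m - 1) else 0)
        + μ * ((n : ℝ) + 1) / ((n : ℝ) + m + 1) * P (n + 1) m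
        + ((m : ℝ) + 1) * (ν / ((n : ℝ) + m + 1) + θ) * P n (m + 1)

/-- `P` is a stationary distribution of the two-class processor-sharing queue. -/
def IsStationaryDist (α β μ ν θ : ℝ) (P : ℕ → ℕ → ℝ) : Prop :=
  (∀ n m : ℕ, 0 ≤ P n m) ∧ HasSum (fun p : ℕ × ℕ => P p.1 p.2) 1 ∧
    KolmogorovEqs α β μ ν θ P

/-!
Sum the Kolmogorov equation of state `(n, m)` over `m`. The impatient transitions inside row `n`
telescope: they are the differences `J m - J (m + 1)` of the net flow `J m` from level `m - 1` to
level `m`, with `J 0 = 0` and `J` summable by the moment hypothesis. What is left balances the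
patient flows between rows `n - 1`, `n`, `n + 1`, and induction on `n` shows that the arrival flow
`α Σ_m Π(n, m)` out of row `n` equals the patient-departure flow back from row `n + 1`.
-/

theorem Summable.mul_of_abs_le {f c : ℕ → ℝ} {C : ℝ} (hf : Summable f) (hc : ∀ m, |c m| ≤ C) :
    Summable fun m => c m * f m :=
  hf.abs.mul_left C |>.of_norm_bounded fun m => by
    rw [Real.norm_eq_abs, abs_mul]
    exact mul_le_mul_of_nonneg_right (hc m) (abs_nonneg _)

theorem hasSum_sub_succ {J : ℕ → ℝ} (hJ : Summable J) :
    HasSum (fun m => J m - J (m + 1)) (J 0) := by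
  have hshift := (hasSum_nat_add_iff' 1).mpr hJ.hasSum
  simpa using hJ.hasSum.sub hshift

theorem abs_div_add_le_one (a b : ℕ) : |(a : ℝ) / (a + b)| ≤ 1 := by
  rw [abs_of_nonneg (by positivity)]
  exact div_le_one_of_le₀ (le_add_of_nonneg_right b.cast_nonneg) (by positivity)

section Balance

variable {α β μ ν θ : ℝ} {P : ℕ → ℕ → ℝ}

def patientDeparture (μ : ℝ) (P : ℕ → ℕ → ℝ) (n m : ℕ) : ℝ :=
  μ * (n / ((n : ℝ) + m)) * P n m

/-- Net probability flow from `(n, m - 1)` up to `(n, m)`. -/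
def impatientFlux (β ν θ : ℝ) (P : ℕ → ℕ → ℝ) (n m : ℕ) : ℝ :=
  β * (if 0 < m then P n (m - 1) else 0) - (ν * (m / ((n : ℝ) + m)) + θ * m) * P n m

-- At the empty state `n + m = 0`, the junk value `0 / 0 = 0` plays the role of the indicator.
theorem KolmogorovEqs.cell_balance (hK : KolmogorovEqs α β μ ν θ P) (n m : ℕ) :
    α * P n m + patientDeparture μ P n m - α * (if 0 < n then P (n - 1) m else 0)
        - patientDeparture μ P (n + 1) m
      = impatientFlux β ν θ P n m - impatientFlux β ν θ P n (m + 1) := by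
  have hrate : (if 0 < n + m then (μ * n + ν * m) / ((n : ℝ) + m) else 0)
      = μ * (n / ((n : ℝ) + m)) + ν * (m / ((n : ℝ) + m)) := by
    split_ifs with h
    · ring
    · obtain ⟨rfl, rfl⟩ : n = 0 ∧ m = 0 := by omega
      simp
  have hnm := hK n m
  rw [hrate] at hnm
  simp only [patientDeparture, impatientFlux, Nat.zero_lt_succ, if_true, Nat.add_sub_cancel,
    Nat.cast_add, Nat.cast_one]
  linear_combination hnm

theorem summable_patientDeparture (μ : ℝ) {n : ℕ} (hrow : Summable (P n ·)) :
    Summable (patientDeparture μ P n ·) :=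
  hrow.mul_of_abs_le (C := |μ|) fun m => by
    rw [abs_mul]
    exact mul_le_of_le_one_right (abs_nonneg μ) (abs_div_add_le_one n m)

theorem summable_impatientFlux (β ν θ : ℝ) {n : ℕ} (hrow : Summable (P n ·))
    (hmom : Summable fun m : ℕ => (m : ℝ) * P n m) :
    Summable (impatientFlux β ν θ P n ·) := by
  have harrival : Summable fun m : ℕ => β * if 0 < m then P n (m - 1) else 0 :=
    (summable_nat_add_iff 1).mp <| by simpa using hrow.mul_left β
  have hservice : Summable fun m : ℕ => ν * (m / ((n : ℝ) + m)) * P n m :=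
    hrow.mul_of_abs_le (C := |ν|) fun m => by
      rw [abs_mul, add_comm (n : ℝ)]
      exact mul_le_of_le_one_right (abs_nonneg ν) (abs_div_add_le_one m n)
  refine harrival.sub ((hservice.add (hmom.mul_left θ)).congr fun m => ?_)
  ring

theorem KolmogorovEqs.row_balance (hK : KolmogorovEqs α β μ ν θ P)
    (hrow : ∀ n, Summable (P n ·)) (hmom : ∀ n, Summable fun m : ℕ => (m : ℝ) * P n m) (n : ℕ) :
    α * ∑' m, P n m + ∑' m, patientDeparture μ P n m
      = α * (if 0 < n then ∑' m, P (n - 1) m else 0) + ∑' m, patientDeparture μ P (n + 1) m := by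
  have harrival : HasSum (fun m => α * if 0 < n then P (n - 1) m else 0)
      (α * if 0 < n then ∑' m, P (n - 1) m else 0) := by
    split_ifs
    · exact (hrow (n - 1)).hasSum.mul_left α
    · simp
  have hsum := ((((hrow n).hasSum.mul_left α).add
    (summable_patientDeparture μ (hrow n)).hasSum).sub harrival).sub
    (summable_patientDeparture μ (hrow (n + 1))).hasSum
  have hflux := hasSum_sub_succ (summable_impatientFlux β ν θ (hrow n) (hmom n))
  simp_rw [← hK.cell_balance] at hflux
  have hempty : impatientFlux β ν θ P n 0 = 0 := by simp [impatientFlux]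
  linear_combination hsum.unique (hempty ▸ hflux)

theorem KolmogorovEqs.patient_balance (hK : KolmogorovEqs α β μ ν θ P)
    (hrow : ∀ n, Summable (P n ·)) (hmom : ∀ n, Summable fun m : ℕ => (m : ℝ) * P n m) (n : ℕ) :
    α * ∑' m, P n m = ∑' m, patientDeparture μ P (n + 1) m := by
  induction n with
  | zero => simpa [patientDeparture] using hK.row_balance hrow hmom 0
  | succ k ih =>
    have hnext := hK.row_balance hrow hmom (k + 1)
    simp only [Nat.zero_lt_succ, if_true, Nat.add_sub_cancel] at hnext
    linarith

end Balance

theorem marginal_flow_balance_general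
    (α β μ ν θ : ℝ)
    (P : ℕ → ℕ → ℝ) (hP : IsStationaryDist α β μ ν θ P)
    (hmom : ∀ n : ℕ, Summable (fun m : ℕ => (m : ℝ) * P n m)) :
    ∀ n : ℕ, α * ∑' m : ℕ, P n m
      = μ * ((n : ℝ) + 1) * ∑' m : ℕ, P (n + 1) m / ((n : ℝ) + m + 1) := by
  obtain ⟨-, hsum, hK⟩ := hP
  intro n
  rw [hK.patient_balance hsum.summable.prod_factor hmom n, ← tsum_mul_left]
  refine tsum_congr fun m => ?_
  simp only [patientDeparture, Nat.cast_add, Nat.cast_one]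
  ring

/-- Flow balance for the marginal of the patient-customer component:
`α Σ_m Π(n,m) = μ(n+1) Σ_m Π(n+1,m)/(n+m+1)`. -/
theorem marginal_flow_balance
    (α β μ ν θ : ℝ) (hα : 0 < α) (hβ : 0 < β) (hμ : 0 < μ) (hν : 0 < ν) (hθ : 0 < θ)
    (P : ℕ → ℕ → ℝ) (hP : IsStationaryDist α β μ ν θ P)
    (hmom : ∀ n : ℕ, Summable (fun m : ℕ => (m : ℝ) * P n m)) :
    ∀ n : ℕ, α * ∑' m : ℕ, P n m
      = μ * ((n : ℝ) + 1) * ∑' m : ℕ, P (n + 1) m / ((n : ℝ) + m + 1) :=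
  marginal_flow_balance_general α β μ ν θ P hP hmom
end
end

section
/- Let 0 < ρ < 1. Then lim_{A→∞} √(A/(2π)) · (1−ρ) · ∫_0^∞ √(x·(x+1)) · exp(−A·Φ(x)) dx = ρ/(1−ρ). -/
noncomputable section

open Real Filter Set Topology MeasureTheory

/-! Laplace's method. With `m = ρ/(1-ρ)`, the substitution `x = m + v/√A` turns
`√A · ∫₀^∞ √(x(x+1)) e^{-AΦ(x)} dx` into the integral of a function of `v` that converges
pointwise to `√(m(m+1)) e^{-Φ''(m) v²/2}`, because `Φ` has a double zero at `m`.
Convexity of `Φ` upgrades the local bound `Φ(m+s) ≥ Φ''(m) s²/4` to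
`Φ(x) ≥ k·min((x-m)², |x-m|)`, which for `A ≥ 1` gives the integrable majorant
`C (1+|v|) e^{-k|v|}`. Dominated convergence and the Gaussian integral give the limit
`√(m(m+1)) · √(2π/Φ''(m)) = √(2π) m(m+1)`, since `Φ''(m) = 1/(m(m+1))`, and
`(1-ρ) m(m+1) = m`. -/

def Phi (ρ x : ℝ) : ℝ :=
  x * Real.log (x / ρ) - (x + 1) * Real.log (x + 1) - Real.log (1 - ρ)

open Asymptotics Metric

lemma abs_le_mul_sq_of_abs_deriv2_le {h h' h'' : ℝ → ℝ} {m r ε : ℝ}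
    (hh : ∀ x ∈ closedBall m r, HasDerivAt h (h' x) x)
    (hh' : ∀ x ∈ closedBall m r, HasDerivAt h' (h'' x) x)
    (hε : ∀ x ∈ closedBall m r, |h'' x| ≤ ε) (h0 : h m = 0) (h0' : h' m = 0)
    {x : ℝ} (hx : x ∈ closedBall m r) : |h x| ≤ ε * r ^ 2 := by
  have hm : m ∈ closedBall m r := mem_closedBall_self (dist_nonneg.trans hx)
  have h'_le : ∀ y ∈ closedBall m r, ‖h' y‖ ≤ ε * r := by
    intro y hy
    have := (convex_closedBall m r).norm_image_sub_le_of_norm_hasDerivWithin_le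
      (fun z hz => (hh' z hz).hasDerivWithinAt) hε hm hy
    rw [h0', sub_zero, ← dist_eq_norm] at this
    exact this.trans (mul_le_mul_of_nonneg_left hy ((abs_nonneg _).trans (hε m hm)))
  have := (convex_closedBall m r).norm_image_sub_le_of_norm_hasDerivWithin_le
    (fun z hz => (hh z hz).hasDerivWithinAt) h'_le hm hx
  rw [h0, sub_zero, ← dist_eq_norm] at this
  calc |h x| ≤ ε * r * dist x m := this
    _ ≤ ε * r * r := mul_le_mul_of_nonneg_left hx ((norm_nonneg _).trans (h'_le m hm))
    _ = ε * r ^ 2 := by ring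

theorem isLittleO_sub_half_mul_sq {g g' g'' : ℝ → ℝ} {m : ℝ}
    (hg : ∀ᶠ x in 𝓝 m, HasDerivAt g (g' x) x) (hg' : ∀ᶠ x in 𝓝 m, HasDerivAt g' (g'' x) x)
    (hg'' : ContinuousAt g'' m) (h0 : g m = 0) (h0' : g' m = 0) :
    (fun s => g (m + s) - g'' m / 2 * s ^ 2) =o[𝓝 0] fun s => s ^ 2 := by
  refine IsLittleO.of_bound fun ε hε => ?_
  obtain ⟨δ, hδ, hnear⟩ := Metric.eventually_nhds_iff_ball.1
    (hg.and (hg'.and (hg''.eventually (closedBall_mem_nhds (g'' m) hε))))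
  filter_upwards [ball_mem_nhds 0 hδ] with s hs
  have hsub : closedBall m |s| ⊆ ball m δ :=
    closedBall_subset_ball (by simpa [Real.dist_eq] using hs)
  have hmain := abs_le_mul_sq_of_abs_deriv2_le (r := |s|) (ε := ε)
    (h := fun x => g x - g'' m / 2 * (x - m) ^ 2) (h' := fun x => g' x - g'' m * (x - m))
    (h'' := fun x => g'' x - g'' m)
    (fun x hx => ((hnear x (hsub hx)).1.sub
      ((((hasDerivAt_id x).sub_const m).pow 2).const_mul (g'' m / 2))).congr_deriv
        (by simp only [id]; ring))
    (fun x hx => ((hnear x (hsub hx)).2.1.sub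
      (((hasDerivAt_id x).sub_const m).const_mul (g'' m))).congr_deriv (by ring))
    (fun x hx => (hnear x (hsub hx)).2.2)
    (by simp [h0]) (by simp [h0'])
    (x := m + s) (by simp)
  simpa [Real.norm_eq_abs, sq_abs] using hmain

theorem ConvexOn.exists_pos_mul_min_sq_abs_le {S : Set ℝ} {f : ℝ → ℝ} {m c : ℝ}
    (hf : ConvexOn ℝ S f) (hm : m ∈ S) (hfm : f m = 0) (hc : 0 < c)
    (hloc : ∀ᶠ s in 𝓝 0, c * s ^ 2 ≤ f (m + s)) :
    ∃ k > 0, ∀ x ∈ S, k * min ((x - m) ^ 2) |x - m| ≤ f x := by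
  obtain ⟨ε, hε, hball⟩ := nhds_basis_closedBall.eventually_iff.1 hloc
  set δ := min ε 1
  have hδ : 0 < δ := lt_min hε one_pos
  have hloc' (s : ℝ) (hs : |s| ≤ δ) : c * s ^ 2 ≤ f (m + s) :=
    hball (by simpa using hs.trans (min_le_left _ _))
  refine ⟨c * δ, by positivity, fun x hx => ?_⟩
  rcases le_or_gt |x - m| δ with hxδ | hxδ
  · calc c * δ * min ((x - m) ^ 2) |x - m| ≤ c * 1 * (x - m) ^ 2 := by
          gcongr
          exacts [min_le_right _ _, min_le_left _ _]
      _ ≤ f x := by simpa using hloc' (x - m) hxδ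
  · -- the point of `[m, x]` at distance `δ` from `m` lies below the chord from `(m, 0)`
    set t := δ / |x - m|
    have hxm : 0 < |x - m| := hδ.trans hxδ
    have ht : 0 < t := div_pos hδ hxm
    have hchord := hf.2 hm hx (sub_nonneg.2 ((div_le_one hxm).2 hxδ.le)) ht.le (by ring)
    simp only [smul_eq_mul, hfm, mul_zero, zero_add] at hchord
    rw [show (1 - t) * m + t * x = m + t * (x - m) by ring] at hchord
    have hdist : |t * (x - m)| = δ := by
      rw [abs_mul, abs_of_pos ht, div_mul_cancel₀ _ hxm.ne']
    have hscaled : t * (c * δ * |x - m|) ≤ t * f x :=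
      calc t * (c * δ * |x - m|) = c * |t * (x - m)| ^ 2 := by
            rw [hdist]; simp only [t]; field_simp
        _ ≤ f (m + t * (x - m)) := by rw [sq_abs]; exact hloc' _ hdist.le
        _ ≤ t * f x := hchord
    calc c * δ * min ((x - m) ^ 2) |x - m| ≤ c * δ * |x - m| := by gcongr; exact min_le_right _ _
      _ ≤ f x := le_of_mul_le_mul_left hscaled ht

lemma integrable_exp_neg_mul_abs {b : ℝ} (hb : 0 < b) :
    Integrable fun v : ℝ => exp (-(b * |v|)) := by
  refine (by fun_prop : Continuous fun v : ℝ => exp (-(b * |v|))).locallyIntegrable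
    |>.integrable_of_isBigO_atTop_of_norm_isNegInvariant (g := fun v => exp (-b * v))
    (ae_of_all _ fun v => by simp) ?_ ⟨Ioi 0, Ioi_mem_atTop 0, exp_neg_integrableOn_Ioi 0 hb⟩
  refine EventuallyEq.isBigO ?_
  filter_upwards [eventually_ge_atTop 0] with v hv
  rw [abs_of_nonneg hv, neg_mul]

lemma integrable_one_add_abs_mul_exp_neg_mul_abs {b : ℝ} (hb : 0 < b) :
    Integrable fun v : ℝ => (1 + |v|) * exp (-(b * |v|)) := by
  refine ((integrable_exp_neg_mul_abs (half_pos hb)).const_mul (1 + 2 / b)).mono'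
    (by fun_prop) (ae_of_all _ fun v => ?_)
  have hlin : 1 + |v| ≤ (1 + 2 / b) * exp (b / 2 * |v|) := by
    calc 1 + |v| ≤ (1 + 2 / b) * (b / 2 * |v| + 1) := by
          field_simp; nlinarith [mul_nonneg (sq_nonneg b) (abs_nonneg v)]
      _ ≤ _ := by gcongr; exact add_one_le_exp _
  rw [Real.norm_of_nonneg (by positivity)]
  calc (1 + |v|) * exp (-(b * |v|)) ≤ (1 + 2 / b) * exp (b / 2 * |v|) * exp (-(b * |v|)) := by
        gcongr
    _ = (1 + 2 / b) * exp (-(b / 2 * |v|)) := by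
        rw [mul_assoc, ← exp_add]; ring_nf

section Laplace

variable {S : Set ℝ} {f φ : ℝ → ℝ} {m c k C A : ℝ}

def laplaceRescaled (S : Set ℝ) (f φ : ℝ → ℝ) (m A v : ℝ) : ℝ :=
  S.indicator (fun x => f x * exp (-(A * φ x))) (m + v / √A)

lemma integral_laplaceRescaled (hS : MeasurableSet S) (hA : 0 < A) :
    ∫ v, laplaceRescaled S f φ m A v = √A * ∫ x in S, f x * exp (-(A * φ x)) := by
  have := Measure.integral_comp_div
    (fun y => S.indicator (fun x => f x * exp (-(A * φ x))) (m + y)) √A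
  rwa [abs_of_pos (sqrt_pos.2 hA), smul_eq_mul, integral_add_left_eq_self,
    integral_indicator hS] at this

lemma abs_sub_one_le_mul_min_sq_abs (hA : 1 ≤ A) (v : ℝ) :
    |v| - 1 ≤ A * min ((v / √A) ^ 2) |v / √A| := by
  have hsA : 1 ≤ √A := one_le_sqrt.2 hA
  have hsq : √A ^ 2 = A := sq_sqrt (by linarith)
  have hsq_mul : A * (v / √A) ^ 2 = v ^ 2 := by
    rw [div_pow, hsq, mul_div_cancel₀ _ (by linarith)]
  have habs_mul : A * |v / √A| = √A * |v| := by
    rw [abs_div, abs_of_pos (by linarith : (0 : ℝ) < √A)]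
    nth_rewrite 1 [← hsq]
    field_simp
  rw [mul_min_of_nonneg _ _ (by linarith), hsq_mul, habs_mul]
  refine le_min ?_ ?_
  · nlinarith [abs_nonneg v, sq_abs v]
  · nlinarith [abs_nonneg v]

lemma abs_laplaceRescaled_le (hC : 0 ≤ C) (hk : 0 ≤ k)
    (hfC : ∀ x ∈ S, |f x| ≤ C * (1 + |x - m|))
    (hφk : ∀ x ∈ S, k * min ((x - m) ^ 2) |x - m| ≤ φ x) (hA : 1 ≤ A) (v : ℝ) :
    |laplaceRescaled S f φ m A v| ≤ C * exp k * ((1 + |v|) * exp (-(k * |v|))) := by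
  unfold laplaceRescaled
  by_cases hv : m + v / √A ∈ S
  · rw [indicator_of_mem hv, abs_mul, abs_exp]
    have hx := add_sub_cancel_left m (v / √A)
    have hvA : |v / √A| ≤ |v| := by
      rw [abs_div, abs_of_pos (by positivity : 0 < √A)]
      exact div_le_self (abs_nonneg v) (one_le_sqrt.2 hA)
    have hf := hfC _ hv
    have hφ := hφk _ hv
    rw [hx] at hf hφ
    calc |f (m + v / √A)| * exp (-(A * φ (m + v / √A)))
        ≤ (C * (1 + |v|)) * exp (k * (1 - |v|)) := by
          gcongr
          · exact hf.trans (by gcongr)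
          · nlinarith [abs_sub_one_le_mul_min_sq_abs hA v]
      _ = C * exp k * ((1 + |v|) * exp (-(k * |v|))) := by
          rw [mul_sub, mul_one, sub_eq_add_neg, exp_add]; ring
  · rw [indicator_of_notMem hv, abs_zero]
    positivity

lemma tendsto_mul_comp_add_div_sqrt
    (hφc : (fun s => φ (m + s) - c / 2 * s ^ 2) =o[𝓝 0] fun s => s ^ 2) (v : ℝ) :
    Tendsto (fun A => A * φ (m + v / √A)) atTop (𝓝 (c / 2 * v ^ 2)) := by
  have hs : Tendsto (fun A => v / √A) atTop (𝓝 0) :=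
    tendsto_const_nhds.div_atTop tendsto_sqrt_atTop
  have ho := (isBigO_refl (fun A : ℝ => A) atTop).mul_isLittleO (hφc.comp_tendsto hs)
  have hA : ∀ᶠ A : ℝ in atTop, A * (v / √A) ^ 2 = v ^ 2 := by
    filter_upwards [eventually_gt_atTop 0] with A hA
    rw [div_pow, sq_sqrt hA.le, mul_div_cancel₀ _ hA.ne']
  have ho' : (fun A => A * φ (m + v / √A) - c / 2 * v ^ 2) =o[atTop] fun _ => v ^ 2 := by
    refine ho.congr' ?_ hA
    filter_upwards [hA] with A hA
    simp only [Function.comp_apply]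
    rw [mul_sub, ← hA]; ring
  exact tendsto_sub_nhds_zero_iff.1
    ((isLittleO_one_iff ℝ).1 (ho'.trans_isBigO (isBigO_const_one _ _ _)))

lemma tendsto_laplaceRescaled (hmS : S ∈ 𝓝 m) (hfm : ContinuousAt f m)
    (hφc : (fun s => φ (m + s) - c / 2 * s ^ 2) =o[𝓝 0] fun s => s ^ 2) (v : ℝ) :
    Tendsto (fun A => laplaceRescaled S f φ m A v) atTop (𝓝 (f m * exp (-(c / 2 * v ^ 2)))) := by
  have hx : Tendsto (fun A => m + v / √A) atTop (𝓝 m) := by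
    simpa using tendsto_const_nhds.add (tendsto_const_nhds.div_atTop tendsto_sqrt_atTop)
  refine ((hfm.tendsto.comp hx).mul (tendsto_mul_comp_add_div_sqrt hφc v).neg.rexp).congr' ?_
  filter_upwards [hx.eventually_mem hmS] with A hA
  simp [laplaceRescaled, indicator_of_mem hA]

theorem tendsto_sqrt_mul_setIntegral_mul_exp_neg_mul (hS : MeasurableSet S) (hmS : S ∈ 𝓝 m)
    (hf : Measurable f) (hφ : Measurable φ) (hfm : ContinuousAt f m)
    (hfC : ∀ x ∈ S, |f x| ≤ C * (1 + |x - m|)) (hk : 0 < k)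
    (hφk : ∀ x ∈ S, k * min ((x - m) ^ 2) |x - m| ≤ φ x)
    (hφc : (fun s => φ (m + s) - c / 2 * s ^ 2) =o[𝓝 0] fun s => s ^ 2) :
    Tendsto (fun A => √A * ∫ x in S, f x * exp (-(A * φ x))) atTop
      (𝓝 (f m * √(2 * π / c))) := by
  have hC : 0 ≤ C := by
    have := hfC m (mem_of_mem_nhds hmS)
    rw [sub_self, abs_zero, add_zero, mul_one] at this
    exact (abs_nonneg _).trans this
  have hlim := tendsto_integral_filter_of_dominated_convergence _
    (Eventually.of_forall fun A => (by unfold laplaceRescaled; fun_prop :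
      Measurable (laplaceRescaled S f φ m A)).aestronglyMeasurable)
    (eventually_ge_atTop 1 |>.mono fun A hA => ae_of_all _
      (abs_laplaceRescaled_le hC hk.le hfC hφk hA))
    ((integrable_one_add_abs_mul_exp_neg_mul_abs hk).const_mul (C * exp k))
    (ae_of_all _ (tendsto_laplaceRescaled hmS hfm hφc))
  have hgauss : ∫ v, f m * exp (-(c / 2 * v ^ 2)) = f m * √(2 * π / c) := by
    simp_rw [integral_const_mul, ← neg_mul, integral_gaussian]
    congr 2
    field_simp
  rw [hgauss] at hlim
  refine hlim.congr' ?_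
  filter_upwards [eventually_gt_atTop 0] with A hA using integral_laplaceRescaled hS hA

end Laplace

lemma eventually_mul_sq_le_of_isLittleO {φ : ℝ → ℝ} {m c : ℝ} (hc : 0 < c)
    (hφc : (fun s => φ (m + s) - c / 2 * s ^ 2) =o[𝓝 0] fun s => s ^ 2) :
    ∀ᶠ s in 𝓝 0, c / 4 * s ^ 2 ≤ φ (m + s) := by
  filter_upwards [hφc.bound (by positivity : 0 < c / 4)] with s hs
  rw [Real.norm_eq_abs, Real.norm_eq_abs, abs_of_nonneg (sq_nonneg s)] at hs
  linarith [neg_abs_le (φ (m + s) - c / 2 * s ^ 2)]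

def Phi' (ρ x : ℝ) : ℝ := Real.log (x / ρ) - Real.log (x + 1)

section Phi

variable {ρ x : ℝ}

lemma hasDerivAt_Phi (hρ : ρ ≠ 0) (hx : 0 < x) : HasDerivAt (Phi ρ) (Phi' ρ x) x := by
  have h1 := ((hasDerivAt_id x).div_const ρ).log (div_ne_zero hx.ne' hρ)
  have h2 := ((hasDerivAt_id x).add_const 1).log (by simp only [id]; positivity)
  refine ((((hasDerivAt_id x).mul h1).sub (((hasDerivAt_id x).add_const 1).mul h2)).sub_const
    (Real.log (1 - ρ))).congr_deriv ?_
  simp only [Phi', id]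
  field_simp
  ring

lemma hasDerivAt_Phi' (hρ : ρ ≠ 0) (hx : 0 < x) : HasDerivAt (Phi' ρ) (x * (x + 1))⁻¹ x := by
  have h1 := ((hasDerivAt_id x).div_const ρ).log (div_ne_zero hx.ne' hρ)
  have h2 := ((hasDerivAt_id x).add_const 1).log (by simp only [id]; positivity)
  refine (h1.sub h2).congr_deriv ?_
  simp only [id]
  field_simp
  ring

lemma convexOn_Phi (hρ : ρ ≠ 0) : ConvexOn ℝ (Ioi 0) (Phi ρ) := by
  refine convexOn_of_hasDerivWithinAt2_nonneg (f' := Phi' ρ) (f'' := fun x => (x * (x + 1))⁻¹)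
    (convex_Ioi 0)
    (fun x hx => (hasDerivAt_Phi hρ hx).continuousAt.continuousWithinAt) ?_ ?_ ?_ <;>
    rw [interior_Ioi]
  · exact fun x hx => (hasDerivAt_Phi hρ hx).hasDerivWithinAt
  · exact fun x hx => (hasDerivAt_Phi' hρ hx).hasDerivWithinAt
  · intro x hx
    have : 0 < x := hx
    positivity

lemma div_one_sub_add_one (hρ : ρ ≠ 1) : ρ / (1 - ρ) + 1 = (1 - ρ)⁻¹ := by
  have : 1 - ρ ≠ 0 := sub_ne_zero.2 hρ.symm
  field_simp
  ring

lemma div_one_sub_div_self (hρ0 : ρ ≠ 0) (hρ1 : ρ ≠ 1) : ρ / (1 - ρ) / ρ = ρ / (1 - ρ) + 1 := by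
  rw [div_one_sub_add_one hρ1, div_div_cancel_left' hρ0]

lemma Phi'_div_one_sub_eq_zero (hρ0 : ρ ≠ 0) (hρ1 : ρ ≠ 1) : Phi' ρ (ρ / (1 - ρ)) = 0 := by
  rw [Phi', div_one_sub_div_self hρ0 hρ1, sub_self]

lemma Phi_div_one_sub_eq_zero (hρ0 : ρ ≠ 0) (hρ1 : ρ ≠ 1) : Phi ρ (ρ / (1 - ρ)) = 0 := by
  rw [Phi, div_one_sub_div_self hρ0 hρ1, div_one_sub_add_one hρ1, Real.log_inv,
    ← div_one_sub_add_one hρ1]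
  ring

end Phi

lemma abs_sqrt_mul_add_one_le {m x : ℝ} (hm : 0 ≤ m) (hx : 0 < x) :
    |√(x * (x + 1))| ≤ (m + 1) * (1 + |x - m|) :=
  calc |√(x * (x + 1))| ≤ √((x + 1) ^ 2) := by
        rw [abs_of_nonneg (sqrt_nonneg _)]; gcongr; nlinarith
    _ ≤ (m + 1) * (1 + |x - m|) := by
        rw [sqrt_sq (by linarith)]; nlinarith [le_abs_self (x - m), abs_nonneg (x - m)]

/-- Laplace-method evaluation of the asymptotic stationary mean:
`√(A/2π)·(1−ρ)·∫_0^∞ √(x(x+1)) e^{−AΦ(x)} dx → ρ/(1−ρ)`. -/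
theorem laplace_mean_evaluation (ρ : ℝ) (hρ0 : 0 < ρ) (hρ1 : ρ < 1) :
    Tendsto
      (fun A : ℝ => Real.sqrt (A / (2 * π)) * (1 - ρ) *
        ∫ x in Ioi (0:ℝ), Real.sqrt (x * (x + 1)) * Real.exp (-(A * Phi ρ x)))
      atTop (𝓝 (ρ / (1 - ρ))) := by
  set m := ρ / (1 - ρ)
  have hm : 0 < m := div_pos hρ0 (sub_pos.2 hρ1)
  have hnear : Ioi 0 ∈ 𝓝 m := Ioi_mem_nhds hm
  have hΦm := Phi_div_one_sub_eq_zero hρ0.ne' hρ1.ne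
  have htaylor := isLittleO_sub_half_mul_sq
    (eventually_of_mem hnear fun x hx => hasDerivAt_Phi hρ0.ne' hx)
    (eventually_of_mem hnear fun x hx => hasDerivAt_Phi' hρ0.ne' hx)
    (by fun_prop (disch := positivity)) hΦm (Phi'_div_one_sub_eq_zero hρ0.ne' hρ1.ne)
  obtain ⟨k, hk, hΦk⟩ := (convexOn_Phi hρ0.ne').exists_pos_mul_min_sq_abs_le hm hΦm
    (by positivity) (eventually_mul_sq_le_of_isLittleO (by positivity) htaylor)
  have hlaplace := (tendsto_sqrt_mul_setIntegral_mul_exp_neg_mul measurableSet_Ioi hnear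
    (by fun_prop) (by unfold Phi; fun_prop) (by fun_prop)
    (fun x hx => abs_sqrt_mul_add_one_le hm.le hx) hk hΦk htaylor).const_mul
    ((1 - ρ) / √(2 * π))
  convert hlaplace using 2 with A
  · rw [sqrt_div' _ (by positivity)]; ring
  · rw [div_inv_eq_mul, sqrt_mul (x := 2 * π) (by positivity)]
    field_simp
    rw [sq_sqrt (by positivity), div_one_sub_add_one hρ1.ne]
    field_simp [(sub_pos.2 hρ1).ne']
end
end

section
/- Let 0 < ρ < 1, 0 < r < 1/ρ and s > 0, and define h(x,y) = Φ(x) − x·log r + Ψ(y) − y·log s for x, y > 0. Then h attains a strict global minimum on (0,∞)² at the unique point (X, Y) = ( ρr/(1−ρr), s ), and the minimum value is h(X,Y) = log(1−ρr) − log(1−ρ) − (s−1). -/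
noncomputable section

open Real Filter Set

/-- `Ψ(y) = y log y − y + 1`. -/
def Psi (y : ℝ) : ℝ := y * Real.log y - y + 1

/-- The tilted function `h(x,y) = Φ(x) − x log r + Ψ(y) − y log s`. -/
def htilt (ρ r s : ℝ) (x y : ℝ) : ℝ :=
  Phi ρ x - x * Real.log r + Psi y - y * Real.log s

/-!
Put `a = ρr`. Up to the constant `log(1−a) − log(1−ρ) − (s−1)`, `h(x,y)` is the sum of
`x log(x/(a(x+1))) + log(1/((1−a)(x+1)))`, a relative entropy between the weights `(x, 1)` and
`(a(x+1), (1−a)(x+1))` of equal total mass `x+1`, and `y log(y/s) − (y − s)`. Both are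
nonnegative by `log t ≤ t − 1`, and they vanish exactly when `x = a(x+1)`, i.e. `x = a/(1−a)`,
and `y = s`.
-/

theorem sub_lt_mul_log_div {u v : ℝ} (hu : 0 < u) (hv : 0 < v) (huv : u ≠ v) :
    u - v < u * log (u / v) := by
  have hlog : log (v / u) < v / u - 1 :=
    log_lt_sub_one_of_pos (div_pos hv hu) (by rwa [Ne, div_eq_one_iff_eq hu.ne', eq_comm])
  calc u - v = -(u * (v / u - 1)) := by field_simp; ring
    _ < -(u * log (v / u)) := by gcongr
    _ = u * log (u / v) := by rw [← inv_div, log_inv]; ring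

theorem sub_le_mul_log_div {u v : ℝ} (hu : 0 < u) (hv : 0 < v) :
    u - v ≤ u * log (u / v) := by
  rcases eq_or_ne u v with rfl | huv
  · simp [div_self hu.ne']
  · exact (sub_lt_mul_log_div hu hv huv).le

section TwoPointGibbs

variable {u₁ u₂ v₁ v₂ : ℝ} (hu₁ : 0 < u₁) (hu₂ : 0 < u₂) (hv₁ : 0 < v₁) (hv₂ : 0 < v₂)
  (hmass : v₁ + v₂ ≤ u₁ + u₂)
include hu₁ hu₂ hv₁ hv₂ hmass

theorem mul_log_div_add_mul_log_div_nonneg :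
    0 ≤ u₁ * log (u₁ / v₁) + u₂ * log (u₂ / v₂) := by
  linarith [sub_le_mul_log_div hu₁ hv₁, sub_le_mul_log_div hu₂ hv₂]

theorem mul_log_div_add_mul_log_div_pos (h : u₁ ≠ v₁) :
    0 < u₁ * log (u₁ / v₁) + u₂ * log (u₂ / v₂) := by
  linarith [sub_lt_mul_log_div hu₁ hv₁ h, sub_le_mul_log_div hu₂ hv₂]

end TwoPointGibbs

theorem Phi_sub_mul_log_eq {ρ r x : ℝ} (hρ : ρ ≠ 0) (hr : r ≠ 0) (hρr : ρ * r ≠ 1)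
    (hx : 0 < x) :
    Phi ρ x - x * log r = log (1 - ρ * r) - log (1 - ρ)
      + (x * log (x / (ρ * r * (x + 1))) + 1 * log (1 / ((1 - ρ * r) * (x + 1)))) := by
  have hx1 : x + 1 ≠ 0 := by positivity
  have h1a : 1 - ρ * r ≠ 0 := sub_ne_zero.mpr hρr.symm
  rw [Phi, log_div hx.ne' hρ, log_div hx.ne' (by positivity), log_mul (by positivity) hx1,
    log_mul hρ hr, one_div, log_inv, log_mul h1a hx1]
  ring

theorem Psi_sub_mul_log_eq {s y : ℝ} (hs : s ≠ 0) (hy : y ≠ 0) :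
    Psi y - y * log s = 1 - s + (y * log (y / s) - (y - s)) := by
  rw [Psi, log_div hy hs]
  ring

theorem htilt_eq {ρ r s x y : ℝ} (hρ : ρ ≠ 0) (hr : r ≠ 0) (hρr : ρ * r ≠ 1) (hs : s ≠ 0)
    (hx : 0 < x) (hy : y ≠ 0) :
    htilt ρ r s x y = log (1 - ρ * r) - log (1 - ρ) - (s - 1)
      + (x * log (x / (ρ * r * (x + 1))) + 1 * log (1 / ((1 - ρ * r) * (x + 1))))
      + (y * log (y / s) - (y - s)) := by
  have hΦ := Phi_sub_mul_log_eq hρ hr hρr hx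
  have hΨ := Psi_sub_mul_log_eq hs hy
  rw [htilt]
  linarith

theorem htilt_strict_global_min_general (ρ r s : ℝ) (hρ0 : 0 < ρ)
    (hr0 : 0 < r) (hr1 : r < 1 / ρ) (hs : 0 < s) :
    (∀ x y : ℝ, 0 < x → 0 < y → (x, y) ≠ (ρ * r / (1 - ρ * r), s) →
      htilt ρ r s (ρ * r / (1 - ρ * r)) s < htilt ρ r s x y) ∧
    htilt ρ r s (ρ * r / (1 - ρ * r)) s
      = Real.log (1 - ρ * r) - Real.log (1 - ρ) - (s - 1) := by
  have ha0 : 0 < ρ * r := mul_pos hρ0 hr0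
  have ha1 : ρ * r < 1 := by rwa [lt_div_iff₀ hρ0, mul_comm] at hr1
  have h1a : 0 < 1 - ρ * r := by linarith
  set X := ρ * r / (1 - ρ * r)
  have hX : 0 < X := div_pos ha0 h1a
  have hX_fix : ρ * r * (X + 1) = X := by simp only [X]; field_simp; ring
  have hX_one : (1 - ρ * r) * (X + 1) = 1 := by simp only [X]; field_simp; ring
  have hmin : htilt ρ r s X s = log (1 - ρ * r) - log (1 - ρ) - (s - 1) := by
    rw [htilt_eq hρ0.ne' hr0.ne' ha1.ne hs.ne' hX hs.ne', hX_fix, hX_one, div_self hX.ne',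
      div_self hs.ne']
    simp
  refine ⟨fun x y hx hy hne ↦ ?_, hmin⟩
  rw [hmin, htilt_eq hρ0.ne' hr0.ne' ha1.ne hs.ne' hx hy.ne']
  have hv₁ : 0 < ρ * r * (x + 1) := by positivity
  have hv₂ : 0 < (1 - ρ * r) * (x + 1) := by positivity
  have hmass : ρ * r * (x + 1) + (1 - ρ * r) * (x + 1) ≤ x + 1 := le_of_eq (by ring)
  have hA := mul_log_div_add_mul_log_div_nonneg hx one_pos hv₁ hv₂ hmass
  have hB := sub_le_mul_log_div hy hs
  rcases ne_or_eq x X with hxX | rfl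
  · have hx_ne : x ≠ ρ * r * (x + 1) := by
      refine fun h ↦ hxX ?_
      rw [eq_div_iff h1a.ne']
      linarith
    have := mul_log_div_add_mul_log_div_pos hx one_pos hv₁ hv₂ hmass hx_ne
    linarith
  · have hys : y ≠ s := fun h ↦ hne (by rw [h])
    have := sub_lt_mul_log_div hy hs hys
    linarith

/-- The tilted rate function has a strict global minimum on `(0,∞)²` at
`(ρr/(1−ρr), s)`, with minimum value `log(1−ρr) − log(1−ρ) − (s−1)`. -/
theorem htilt_strict_global_min (ρ r s : ℝ) (hρ0 : 0 < ρ) (hρ1 : ρ < 1)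
    (hr0 : 0 < r) (hr1 : r < 1 / ρ) (hs : 0 < s) :
    (∀ x y : ℝ, 0 < x → 0 < y → (x, y) ≠ (ρ * r / (1 - ρ * r), s) →
      htilt ρ r s (ρ * r / (1 - ρ * r)) s < htilt ρ r s x y) ∧
    htilt ρ r s (ρ * r / (1 - ρ * r)) s
      = Real.log (1 - ρ * r) - Real.log (1 - ρ) - (s - 1) :=
  htilt_strict_global_min_general ρ r s hρ0 hr0 hr1 hs
end
end

section
/- Let α, μ, ν, θ > 0 with ρ = α/μ < 1, x* = ρ/(1−ρ) and c = ν/θ. Define for x, y > 0: K(x,y) = μ·( x(x+y) − ρ(x+1)² ) / ( (x+1)(x+y) ) and L(x,y) = μ/(2(x+1)²) + α/(2x(x+y)) − α(x+1)y/(x(x+y)²) − νx/((x+y)²·y) − c(1+c)θy/(2(x+y)²) − θ/(12y) − θ·[ c(1+c)/(2(x+y)²) + c/((x+y)y) + 11/(12y²) ] + (1/y)·( νy/(x+y) + θ )·( 1/y + c/(x+y) ). Then for every x > 0: K(x,1) = μ(1−ρ)·(x−x*)/(x+1) and L(x,1) = μ(1−ρ)·(x−x*)/(2x(x+1)²); in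 particular L(x,1)/K(x,1) = 1/(2x(x+1)) for x ≠ x*. -/
noncomputable section

open Real

/-- The coefficient `K(x,y) = μ(x(x+y) − ρ(x+1)²)/((x+1)(x+y))` with `ρ = α/μ`. -/
def Kcoef (α μ : ℝ) (x y : ℝ) : ℝ :=
  μ * (x * (x + y) - (α / μ) * (x + 1) ^ 2) / ((x + 1) * (x + y))

/-- The coefficient `L(x,y)` arising at order `O(1/A)` in the singular
perturbation analysis, with `c = ν/θ`. -/
def Lcoef (α μ ν θ : ℝ) (x y : ℝ) : ℝ :=
  μ / (2 * (x + 1) ^ 2) + α / (2 * x * (x + y)) - α * (x + 1) * y / (x * (x + y) ^ 2)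
    - ν * x / ((x + y) ^ 2 * y) - (ν / θ) * (1 + ν / θ) * θ * y / (2 * (x + y) ^ 2)
    - θ / (12 * y)
    - θ * ((ν / θ) * (1 + ν / θ) / (2 * (x + y) ^ 2) + (ν / θ) / ((x + y) * y)
        + 11 / (12 * y ^ 2))
    + (1 / y) * (ν * y / (x + y) + θ) * (1 / y + (ν / θ) / (x + y))

/-- On the line `y = 1`: `K(x,1) = μ(1−ρ)(x−x*)/(x+1)` and
`L(x,1) = μ(1−ρ)(x−x*)/(2x(x+1)²)`, hence `L(x,1)/K(x,1) = 1/(2x(x+1))`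
for `x ≠ x*`, where `ρ = α/μ` and `x* = ρ/(1−ρ)`. -/
theorem Kcoef_Lcoef_on_line (α μ ν θ : ℝ) (hα : 0 < α) (hμ : 0 < μ)
    (hν : 0 < ν) (hθ : 0 < θ) (hρ : α / μ < 1) :
    ∀ x : ℝ, 0 < x →
      Kcoef α μ x 1 = μ * (1 - α / μ) * (x - (α / μ) / (1 - α / μ)) / (x + 1) ∧
      Lcoef α μ ν θ x 1
        = μ * (1 - α / μ) * (x - (α / μ) / (1 - α / μ)) / (2 * x * (x + 1) ^ 2) ∧
      (x ≠ (α / μ) / (1 - α / μ) →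
        Lcoef α μ ν θ x 1 / Kcoef α μ x 1 = 1 / (2 * x * (x + 1))) := by
  intro x hx
  have hμ' : μ ≠ 0 := hμ.ne'
  have hθ' : θ ≠ 0 := hθ.ne'
  have hx1 : x + 1 ≠ 0 := by positivity
  have hx0 : x ≠ 0 := hx.ne'
  have hr : 1 - α / μ ≠ 0 := by linarith
  have hαμ : α < μ := by
    have := (div_lt_one hμ).mp hρ; linarith
  have hμα : μ - α ≠ 0 := by linarith
  have hK : Kcoef α μ x 1 = μ * (1 - α / μ) * (x - (α / μ) / (1 - α / μ)) / (x + 1) := by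
    unfold Kcoef
    field_simp
    ring
  have hL : Lcoef α μ ν θ x 1
      = μ * (1 - α / μ) * (x - (α / μ) / (1 - α / μ)) / (2 * x * (x + 1) ^ 2) := by
    unfold Lcoef
    field_simp
    ring
  refine ⟨hK, hL, fun hne => ?_⟩
  have hnum : μ * (1 - α / μ) * (x - (α / μ) / (1 - α / μ)) ≠ 0 := by
    have h1 : x - (α / μ) / (1 - α / μ) ≠ 0 := sub_ne_zero.mpr hne
    exact mul_ne_zero (mul_ne_zero hμ' hr) h1
  rw [hK, hL, div_div_div_eq]
  rw [mul_comm (μ * (1 - α / μ) * (x - α / μ / (1 - α / μ))) (x + 1),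
    mul_div_mul_right _ _ hnum]
  rw [div_eq_div_iff (by positivity) (by positivity)]
  ring
end
end

section
/- For natural numbers n, m ≥ 1, let W_m(n) = ∏_{k=1}^{n} (1 + m/k). Then log W_m(n) − [ (n+m)·log(n+m) − n·log n − m·log m − (1/2)·log(2πm) + (1/2)·log(1 + m/n) ] → 0 as n and m jointly tend to infinity, i.e., for every ε > 0 there exists N such that the difference has absolute value less than ε whenever n ≥ N and m ≥ N. -/
noncomputable section

open Real Filter

/-- `W_m(n) = ∏_{k=1}^n (1 + m/k)`. -/
def Wprod (m n : ℕ) : ℝ := ∏ k ∈ Finset.Icc 1 n, (1 + (m : ℝ) / k)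

lemma wprod_eq (m n : ℕ) :
    Wprod m n = ((n + m).factorial : ℝ) / (n.factorial * m.factorial) := by
  induction n with
  | zero => simp [Wprod, div_self (Nat.cast_ne_zero.2 (Nat.factorial_ne_zero m) : (m.factorial:ℝ) ≠ 0)]
  | succ n ih =>
    rw [Wprod, Finset.prod_Icc_succ_top (Nat.succ_le_succ (Nat.zero_le n)), ← Wprod, ih]
    have h1 : n + 1 + m = (n + m) + 1 := by ring
    rw [h1, Nat.factorial_succ, Nat.factorial_succ]
    have h2 : ((n + m).factorial : ℝ) ≠ 0 := Nat.cast_ne_zero.2 (Nat.factorial_ne_zero _)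
    have h3 : (n.factorial : ℝ) ≠ 0 := Nat.cast_ne_zero.2 (Nat.factorial_ne_zero _)
    have h4 : (m.factorial : ℝ) ≠ 0 := Nat.cast_ne_zero.2 (Nat.factorial_ne_zero _)
    have h5 : ((n : ℝ) + 1) ≠ 0 := by positivity
    push_cast
    field_simp
    ring

def dd (k : ℕ) : ℝ :=
  Real.log k.factorial - ((k : ℝ) * Real.log k - k + (1 / 2) * Real.log (2 * π * k))

lemma dd_tendsto : Tendsto dd atTop (nhds 0) := by
  have h := Stirling.tendsto_stirlingSeq_sqrt_pi
  have hπ : Real.sqrt π ≠ 0 := by positivity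
  have hlog : Tendsto (fun k => Real.log (Stirling.stirlingSeq k)) atTop
      (nhds (Real.log (Real.sqrt π))) := h.log hπ
  have heq : ∀ᶠ k in atTop, dd k = Real.log (Stirling.stirlingSeq k) - (1/2) * Real.log π := by
    filter_upwards [eventually_ge_atTop 1] with k hk
    have hk0 : (0:ℝ) < k := by exact_mod_cast hk
    have hf : (0:ℝ) < k.factorial := by exact_mod_cast (Nat.factorial_pos k)
    have hs : (0:ℝ) < Real.sqrt (2 * k) := Real.sqrt_pos.2 (by positivity)
    have hp : (0:ℝ) < ((k : ℝ) / Real.exp 1) ^ k := by positivity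
    rw [Stirling.stirlingSeq, Real.log_div hf.ne' (by positivity),
      Real.log_mul hs.ne' hp.ne', Real.log_pow, Real.log_div hk0.ne' (Real.exp_pos 1).ne',
      Real.log_exp, Real.log_sqrt (by positivity)]
    rw [dd, Real.log_mul (by positivity) hk0.ne', Real.log_mul two_ne_zero Real.pi_ne_zero,
      Real.log_mul two_ne_zero hk0.ne']
    ring
  have : Tendsto dd atTop (nhds (Real.log (Real.sqrt π) - (1/2) * Real.log π)) :=
    (hlog.sub tendsto_const_nhds).congr' (heq.mono fun k hk => hk.symm)
  rw [Real.log_sqrt Real.pi_pos.le] at this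
  have hz : Real.log π / 2 - 1 / 2 * Real.log π = 0 := by ring
  rwa [hz] at this

/-- Stirling-type estimate: as `n, m → ∞` jointly,
`log W_m(n) = (n+m)log(n+m) − n log n − m log m − (1/2)log(2πm)
  + (1/2)log(1+m/n) + o(1)`. -/
theorem log_Wprod_estimate :
    ∀ ε > (0:ℝ), ∃ N : ℕ, ∀ n m : ℕ, N ≤ n → N ≤ m →
      |Real.log (Wprod m n)
          - (((n : ℝ) + m) * Real.log ((n : ℝ) + m) - n * Real.log n
              - m * Real.log m - (1 / 2) * Real.log (2 * π * m)
              + (1 / 2) * Real.log (1 + (m : ℝ) / n))| < ε := by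
  intro ε hε
  have h3 : (0:ℝ) < ε / 3 := by linarith
  obtain ⟨N0, hN0⟩ := (Metric.tendsto_atTop.1 dd_tendsto) (ε/3) h3
  refine ⟨max N0 1, fun n m hn hm => ?_⟩
  have hn1 : 1 ≤ n := le_trans (le_max_right _ _) hn
  have hm1 : 1 ≤ m := le_trans (le_max_right _ _) hm
  have hnN : N0 ≤ n := le_trans (le_max_left _ _) hn
  have hmN : N0 ≤ m := le_trans (le_max_left _ _) hm
  have hn0 : (0:ℝ) < n := by exact_mod_cast hn1
  have hm0 : (0:ℝ) < m := by exact_mod_cast hm1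
  -- key equation
  have hfn : (0:ℝ) < n.factorial := by exact_mod_cast n.factorial_pos
  have hfm : (0:ℝ) < m.factorial := by exact_mod_cast m.factorial_pos
  have hlogW : Real.log (Wprod m n)
      = Real.log ((n + m).factorial) - Real.log n.factorial - Real.log m.factorial := by
    rw [wprod_eq, Real.log_div (by positivity) (by positivity),
      Real.log_mul hfn.ne' hfm.ne', sub_sub]
  have hcast : ((n + m : ℕ) : ℝ) = (n : ℝ) + m := by push_cast; ring
  have hlog1 : Real.log (1 + (m : ℝ) / n) = Real.log ((n : ℝ) + m) - Real.log n := by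
    have : 1 + (m : ℝ) / n = ((n : ℝ) + m) / n := by field_simp
    rw [this, Real.log_div (by positivity) hn0.ne']
  have hlog2 : Real.log (2 * π * ((n : ℝ) + m))
      = Real.log (2 * π) + Real.log ((n : ℝ) + m) :=
    Real.log_mul (by positivity) (by positivity)
  have hlog3 : Real.log (2 * π * (n : ℝ)) = Real.log (2 * π) + Real.log n :=
    Real.log_mul (by positivity) hn0.ne'
  have hlog4 : Real.log (2 * π * (m : ℝ)) = Real.log (2 * π) + Real.log m :=
    Real.log_mul (by positivity) hm0.ne'
  have key : Real.log (Wprod m n)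
          - (((n : ℝ) + m) * Real.log ((n : ℝ) + m) - n * Real.log n
              - m * Real.log m - (1 / 2) * Real.log (2 * π * m)
              + (1 / 2) * Real.log (1 + (m : ℝ) / n))
      = dd (n + m) - dd n - dd m := by
    rw [hlogW, hlog1]
    unfold dd
    rw [hcast, hlog2, hlog3, hlog4]
    ring
  rw [key]
  have h1 := hN0 (n + m) (le_trans hnN (Nat.le_add_right n m))
  have h2 := hN0 n hnN
  have h4 := hN0 m hmN
  rw [Real.dist_eq, sub_zero] at h1 h2 h4
  calc |dd (n + m) - dd n - dd m| ≤ |dd (n + m)| + |dd n| + |dd m| := by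
        apply (abs_sub _ _).trans
        gcongr
        exact abs_sub _ _
    _ < ε := by linarith
end
end
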